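/- arXiv:cs/0609052 — 3 statements merged into one kernel-verified Lean document; each statement's English description precedes it below -/
import Mathlib

section
/- For every Kripke frame (W,R), every valuation, every point x, and all i ∈ {0,1,2}, j ≥ 0, the formula α^i_j → ¬◇α^i_j is true at x, where the formulas α^i_j are defined as in the Chagrov encoding (in particular α^i_{j+1} = ◇α^i_0 ∧ ◇α^i_j ∧ ¬◇◇α^i_j ∧ ⋀_{k≠i}¬◇α^k_0). -/
inductive MF : Type where
  | var : Nat → MF
  | bot : MF
  | neg : MF → MF
  | and : MF → MF → MF
  | box : MF → MF

namespace MF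
def top : MF := neg bot
def or (φ ψ : MF) : MF := neg (and (neg φ) (neg ψ))
def imp (φ ψ : MF) : MF := or (neg φ) ψ
def dia (φ : MF) : MF := neg (box (neg φ))
def iff (φ ψ : MF) : MF := and (imp φ ψ) (imp ψ φ)
def subst (σ : Nat → MF) : MF → MF
  | .var n => σ n
  | .bot => .bot
  | .neg φ => .neg (subst σ φ)
  | .and φ ψ => .and (subst σ φ) (subst σ ψ)
  | .box φ => .box (subst σ φ)
end MF

/-- Truth at a point of a Kripke model. -/
def sat {W : Type} (R : W → W → Prop) (V : Nat → W → Prop) : W → MF → Prop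
  | x, .var n => V n x
  | _, .bot => False
  | x, .neg φ => ¬ sat R V x φ
  | x, .and φ ψ => sat R V x φ ∧ sat R V x ψ
  | x, .box φ => ∀ y, R x y → sat R V y φ
namespace MF
/- The variable-free Chagrov formulas. -/
def fα : MF := and (dia top) (box (dia top))
def fβ : MF := box bot
def fγ : MF := and (dia fα) (and (dia fβ) (neg (dia (dia fβ))))
def fδ : MF := and (neg fγ) (and (dia fβ) (neg (dia (dia fβ))))
def fδ₁ : MF := and (dia fδ) (neg (dia (dia fδ)))
def fδ₂ : MF := and (dia fδ₁) (neg (dia (dia fδ₁)))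
def fγ₁ : MF := and (dia fγ) (and (neg (dia (dia fγ))) (neg (dia fδ)))
def fγ₂ : MF := and (dia fγ₁) (and (neg (dia (dia fγ₁))) (neg (dia fδ)))
def α₀ : Nat → MF
  | 0 => and (dia fγ) (and (dia fδ) (and (neg (dia (dia fγ))) (neg (dia (dia fδ)))))
  | 1 => and (dia fγ₁) (and (dia fδ₁) (and (neg (dia (dia fγ₁))) (neg (dia (dia fδ₁)))))
  | 2 => and (dia fγ₂) (and (dia fδ₂) (and (neg (dia (dia fγ₂))) (neg (dia (dia fδ₂)))))
  | _ => bot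
/-- ⋀_{k ≠ i, k ≤ 2} ¬◇α^k_0 -/
def others (i : Nat) : MF :=
  ((((List.range 3).filter (· ≠ i))).map (fun k => neg (dia (α₀ k)))).foldr MF.and MF.top
/-- α^i_j, with α^i_{j+1} = ◇α^i_0 ∧ ◇α^i_j ∧ ¬◇◇α^i_j ∧ ⋀_{k≠i}¬◇α^k_0. -/
def alpha (i : Nat) : Nat → MF
  | 0 => α₀ i
  | (j+1) => and (dia (α₀ i)) (and (dia (alpha i j)) (and (neg (dia (dia (alpha i j)))) (others i)))
end MF


lemma sat_imp {W} (R : W → W → Prop) (V : Nat → W → Prop) (x : W) (φ ψ : MF) :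
    sat R V x (MF.imp φ ψ) ↔ (sat R V x φ → sat R V x ψ) := by
  simp only [MF.imp, MF.or, sat]; tauto

lemma sat_dia {W} (R : W → W → Prop) (V : Nat → W → Prop) (x : W) (φ : MF) :
    sat R V x (MF.dia φ) ↔ ∃ y, R x y ∧ sat R V y φ := by
  simp only [MF.dia, sat]; push_neg; rfl

/-- α^i_j → ¬◇α^i_j is true at every point of every model. -/
theorem alpha_not_dia_alpha :
    ∀ (W : Type) (R : W → W → Prop) (V : Nat → W → Prop) (x : W) (i j : Nat), i ≤ 2 →
      sat R V x (MF.imp (MF.alpha i j) (MF.neg (MF.dia (MF.alpha i j)))) := by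
  intro W R V x i j hi
  rw [sat_imp]
  intro h hd
  obtain ⟨y, hxy, hy⟩ := (sat_dia R V x _).1 hd
  cases j with
  | succ j =>
    obtain ⟨h1, h2, h3, h4⟩ : _ ∧ _ ∧ _ ∧ _ := h
    obtain ⟨g1, g2, g3, g4⟩ : _ ∧ _ ∧ _ ∧ _ := hy
    exact h3 fun hall => hall y hxy g2
  | zero =>
    interval_cases i
    · obtain ⟨h1, h2, h3, h4⟩ : _ ∧ _ ∧ _ ∧ _ := h
      obtain ⟨g1, g2, g3, g4⟩ : _ ∧ _ ∧ _ ∧ _ := hy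
      exact h3 fun hall => hall y hxy g1
    · obtain ⟨h1, h2, h3, h4⟩ : _ ∧ _ ∧ _ ∧ _ := h
      obtain ⟨g1, g2, g3, g4⟩ : _ ∧ _ ∧ _ ∧ _ := hy
      exact h3 fun hall => hall y hxy g1
    · obtain ⟨h1, h2, h3, h4⟩ : _ ∧ _ ∧ _ ∧ _ := h
      obtain ⟨g1, g2, g3, g4⟩ : _ ∧ _ ∧ _ ∧ _ := hy
      exact h3 fun hall => hall y hxy g1
end

section
/- Let L be a normal modal logic (with or without the universal modality) such that ¬□⊥ ∈ L. Then a formula φ is unifiable in L (i.e., there is a substitution σ with σ(φ) ∈ L) if and only if some ground substitution σ' (mapping each propositional variable to a formula built from ⊥ and ⊤ only) satisfies σ'(φ) ∈ L. -/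
namespace MF
/-- Variable-free (ground) formulas. -/
def Ground : MF → Prop
  | .var _ => False
  | .bot => True
  | .neg φ => Ground φ
  | .and φ ψ => Ground φ ∧ Ground ψ
  | .box φ => Ground φ
end MF

/-- Boolean evaluation treating variables and boxed formulas as atoms. -/
def beval (v : MF → Bool) : MF → Bool
  | .bot => false
  | .neg φ => !(beval v φ)
  | .and φ ψ => beval v φ && beval v ψ
  | φ => v φ

/-- Propositional tautologies. -/
def Tautology (φ : MF) : Prop := ∀ v : MF → Bool, beval v φ = true

/-- Normal modal logics. -/
structure IsNormal (L : Set MF) : Prop where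
  taut : ∀ φ, Tautology φ → φ ∈ L
  kax : ∀ φ ψ, MF.imp (MF.box (MF.imp φ ψ)) (MF.imp (MF.box φ) (MF.box ψ)) ∈ L
  mp : ∀ φ ψ, MF.imp φ ψ ∈ L → φ ∈ L → ψ ∈ L
  nec : ∀ φ, φ ∈ L → MF.box φ ∈ L
  subst_mem : ∀ σ φ, φ ∈ L → MF.subst σ φ ∈ L


lemma subst_subst (τ σ : Nat → MF) (φ : MF) :
    MF.subst τ (MF.subst σ φ) = MF.subst (fun n => MF.subst τ (σ n)) φ := by
  induction φ <;> simp_all [MF.subst]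

lemma ground_subst_bot (φ : MF) : MF.Ground (MF.subst (fun _ => MF.bot) φ) := by
  induction φ <;> simp_all [MF.subst, MF.Ground]

/-- for normal L with ¬□⊥ ∈ L, φ is unifiable iff it has a ground unifier. -/
theorem unifiable_iff_ground_unifiable :
    ∀ L : Set MF, IsNormal L → MF.neg (MF.box MF.bot) ∈ L →
      ∀ φ : MF, (∃ σ, MF.subst σ φ ∈ L) ↔
        ∃ σ, (∀ n, MF.Ground (σ n)) ∧ MF.subst σ φ ∈ L := by
  intro L hL _ φ
  constructor
  · rintro ⟨σ, hσ⟩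
    refine ⟨fun n => MF.subst (fun _ => MF.bot) (σ n), fun n => ground_subst_bot _, ?_⟩
    rw [← subst_subst]
    exact hL.subst_mem _ _ hσ
  · rintro ⟨σ, _, hσ⟩
    exact ⟨σ, hσ⟩
end

section
/- Let 𝔊 = (W,R,S) be a frame for the hybrid language, 𝔙 a valuation, and x₀ ∈ W a point where the formula Nom is true, where Nom is the conjunction of all formulas M'◇_h n → ◇_h n and ◇_h n → M◇_h n with M ranging over sequences of □,□_h of length ≤ 6 and M' over sequences of ◇,◇_h of length ≤ 6. Then either every point of distance ≤ 6 from x₀ has an S-successor in 𝔙(n), or no point of distance ≤ 6 from x₀ has an S-successor in 𝔙(n). Here distance is measured along S' = R ∪ S. -/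
/-- The hybrid language 𝓗₂ with nominals and two boxes □ and □_h. -/
inductive MH : Type where
  | var : Nat → MH
  | nom : Nat → MH
  | bot : MH
  | neg : MH → MH
  | and : MH → MH → MH
  | box : MH → MH
  | boxh : MH → MH

namespace MH
def top : MH := neg bot
def or (φ ψ : MH) : MH := neg (and (neg φ) (neg ψ))
def imp (φ ψ : MH) : MH := or (neg φ) ψ
def dia (φ : MH) : MH := neg (box (neg φ))
def diah (φ : MH) : MH := neg (boxh (neg φ))
/-- ∃φ := ◇_h(n ∧ ◇_h φ), with n the nominal nom 0. -/
def uEx (φ : MH) : MH := diah (and (nom 0) (diah φ))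
end MH

/-- Truth in a hybrid model: N interprets each nominal as (the unique element of) a singleton. -/
def satH {W : Type} (R S : W → W → Prop) (V : Nat → W → Prop) (N : Nat → W) : W → MH → Prop
  | x, .var n => V n x
  | x, .nom i => x = N i
  | _, .bot => False
  | x, .neg φ => ¬ satH R S V N x φ
  | x, .and φ ψ => satH R S V N x φ ∧ satH R S V N x ψ
  | x, .box φ => ∀ y, R x y → satH R S V N y φ
  | x, .boxh φ => ∀ y, S x y → satH R S V N y φ
/-- Prefixing a formula with a sequence of boxes (true ↦ □, false ↦ □_h). -/
def Mbox (l : List Bool) (φ : MH) : MH :=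
  l.foldr (fun b ψ => if b then MH.box ψ else MH.boxh ψ) φ

/-- Prefixing a formula with a sequence of diamonds (true ↦ ◇, false ↦ ◇_h). -/
def Mdia (l : List Bool) (φ : MH) : MH :=
  l.foldr (fun b ψ => if b then MH.dia ψ else MH.diah ψ) φ

/-- x₀ ⊨ Nom: all conjuncts ◇_h n → M◇_h n and M'◇_h n → ◇_h n (lengths ≤ 6) hold at x₀. -/
def SatNom {W : Type} (R S : W → W → Prop) (V : Nat → W → Prop) (N : Nat → W) (x₀ : W) : Prop :=
  ∀ l : List Bool, l.length ≤ 6 →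
    satH R S V N x₀ (MH.imp (MH.diah (MH.nom 0)) (Mbox l (MH.diah (MH.nom 0)))) ∧
    satH R S V N x₀ (MH.imp (Mdia l (MH.diah (MH.nom 0))) (MH.diah (MH.nom 0)))

/-- Chains of length ≤ m along a relation: distance ≤ m. -/
def stepsLE {W : Type} (S' : W → W → Prop) : Nat → W → W → Prop
  | 0, x, y => x = y
  | (m+1), x, y => stepsLE S' m x y ∨ ∃ z, stepsLE S' m x z ∧ S' z y

section Aux
variable {W : Type} (R S : W → W → Prop) (V : Nat → W → Prop) (N : Nat → W)

lemma sat_imp_s13 (x : W) (φ ψ : MH) :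
    satH R S V N x (MH.imp φ ψ) ↔ (satH R S V N x φ → satH R S V N x ψ) := by
  simp only [MH.imp, MH.or, satH]
  tauto

lemma sat_diah_nom (x : W) :
    satH R S V N x (MH.diah (MH.nom 0)) ↔ S x (N 0) := by
  simp only [MH.diah, satH]
  constructor
  · intro h
    by_contra hS
    exact h (fun y hy he => hS (he ▸ hy))
  · intro hS h
    exact h (N 0) hS rfl

lemma Mbox_append (l : List Bool) (b : Bool) (φ : MH) :
    Mbox (l ++ [b]) φ = Mbox l (Mbox [b] φ) := by
  simp [Mbox, List.foldr_append]

lemma Mdia_append (l : List Bool) (b : Bool) (φ : MH) :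
    Mdia (l ++ [b]) φ = Mdia l (Mdia [b] φ) := by
  simp [Mdia, List.foldr_append]

lemma steps_chain (m : Nat) (x y : W)
    (h : stepsLE (fun u v => R u v ∨ S u v) m x y) :
    ∃ l : List Bool, l.length ≤ m ∧
      (∀ φ, satH R S V N x (Mbox l φ) → satH R S V N y φ) ∧
      (∀ φ, satH R S V N y φ → satH R S V N x (Mdia l φ)) := by
  induction m generalizing y with
  | zero =>
      cases h
      exact ⟨[], by simp, fun φ h => h, fun φ h => h⟩
  | succ m ih =>
      rcases h with h | ⟨z, hz, hstep⟩
      · obtain ⟨l, hl, h1, h2⟩ := ih y h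
        exact ⟨l, hl.trans (Nat.le_succ m), h1, h2⟩
      · obtain ⟨l, hl, h1, h2⟩ := ih z hz
        rcases hstep with hR | hS
        · refine ⟨l ++ [true], by simpa using Nat.succ_le_succ hl, ?_, ?_⟩
          · intro φ hφ
            rw [Mbox_append] at hφ
            have := h1 _ hφ
            simp only [Mbox, List.foldr, if_pos rfl] at this
            exact this y hR
          · intro φ hφ
            rw [Mdia_append]
            refine h2 _ ?_
            simp only [Mdia, List.foldr, if_pos rfl, MH.dia, satH]
            intro h
            exact h y hR hφ
        · refine ⟨l ++ [false], by simpa using Nat.succ_le_succ hl, ?_, ?_⟩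
          · intro φ hφ
            rw [Mbox_append] at hφ
            have := h1 _ hφ
            simp only [Mbox, List.foldr, Bool.false_eq_true, if_false] at this
            exact this y hS
          · intro φ hφ
            rw [Mdia_append]
            refine h2 _ ?_
            simp only [Mdia, List.foldr, Bool.false_eq_true, if_false, MH.diah, satH]
            intro h
            exact h y hS hφ

end Aux

/-- if Nom is true at x₀, then either all points of distance ≤ 6 from x₀
have an S-successor in 𝔙(n), or none of them does. -/
theorem nom_dichotomy :
    ∀ (W : Type) (R S : W → W → Prop) (V : Nat → W → Prop) (N : Nat → W) (x₀ : W),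
      SatNom R S V N x₀ →
      (∀ x : W, stepsLE (fun u v => R u v ∨ S u v) 6 x₀ x → S x (N 0)) ∨
      (∀ x : W, stepsLE (fun u v => R u v ∨ S u v) 6 x₀ x → ¬ S x (N 0)) := by
  intro W R S V N x₀ hNom
  by_cases h0 : S x₀ (N 0)
  · left
    intro x hx
    obtain ⟨l, hl, h1, _⟩ := steps_chain R S V N 6 x₀ x hx
    have hsat := (hNom l hl).1
    rw [sat_imp_s13] at hsat
    have := h1 _ (hsat ((sat_diah_nom R S V N x₀).2 h0))
    exact (sat_diah_nom R S V N x).1 this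
  · right
    intro x hx hSx
    obtain ⟨l, hl, _, h2⟩ := steps_chain R S V N 6 x₀ x hx
    have hsat := (hNom l hl).2
    rw [sat_imp_s13] at hsat
    exact h0 ((sat_diah_nom R S V N x₀).1
      (hsat (h2 _ ((sat_diah_nom R S V N x).2 hSx))))
end
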